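/- First-order error estimate for the prototypical method: assume there are constants C_Π > 0 and H > 0 such that |v − Π_H v|_{M,T} ≤ C_Π H |v|_{L,T} for every element T ∈ 𝒯_H and every v : 𝒩 → ℝ. Then the Galerkin approximation u_H satisfies |u − u_H|_L ≤ C_Π γ⁻¹ H |f|_{M⁻¹}, where |f|_{M⁻¹} := sup{(f, v) : v : 𝒩 → ℝ with |v|_M = 1}. -/

import Mathlib

open Finset

variable {n : ℕ} {N : Type*}

/-- The (edge-weighted) mass bilinear form `(M_S u, v)`. -/
noncomputable def Mform [Fintype N] (G : SimpleGraph N) [DecidableRel G.Adj]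
    (pos : N → EuclideanSpace ℝ (Fin n)) (α : ℝ) (S : Finset N) (u v : N → ℝ) : ℝ :=
  ∑ x ∈ S, (1 / 2 : ℝ) * ∑ y ∈ G.neighborFinset x,
    dist (pos x) (pos y) ^ ((2 : ℝ) - α) * (u x * v x)

/-- The (edge-weighted) stiffness bilinear form `(L_S u, v)`. -/
noncomputable def Lform [Fintype N] (G : SimpleGraph N) [DecidableRel G.Adj]
    (pos : N → EuclideanSpace ℝ (Fin n)) (α : ℝ) (S : Finset N) (u v : N → ℝ) : ℝ :=
  ∑ x ∈ S, (1 / 2 : ℝ) * ∑ y ∈ G.neighborFinset x,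
    ((u x - u y) * (v x - v y)) / dist (pos x) (pos y) ^ α

/-- `|v|_{M,S}`. -/
noncomputable def Mnorm [Fintype N] (G : SimpleGraph N) [DecidableRel G.Adj]
    (pos : N → EuclideanSpace ℝ (Fin n)) (α : ℝ) (S : Finset N) (v : N → ℝ) : ℝ :=
  Real.sqrt (Mform G pos α S v v)

/-- `|v|_{L,S}`. -/
noncomputable def Lnorm [Fintype N] (G : SimpleGraph N) [DecidableRel G.Adj]
    (pos : N → EuclideanSpace ℝ (Fin n)) (α : ℝ) (S : Finset N) (v : N → ℝ) : ℝ :=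
  Real.sqrt (Lform G pos α S v v)

/-- The element average `q_T(v) = (M_T v, 1) / |1|_{M,T}^2`. -/
noncomputable def avg [Fintype N] (G : SimpleGraph N) [DecidableRel G.Adj]
    (pos : N → EuclideanSpace ℝ (Fin n)) (α : ℝ) (T : Finset N) (v : N → ℝ) : ℝ :=
  Mform G pos α T v (fun _ => 1) / Mform G pos α T (fun _ => 1) (fun _ => 1)

/-- Euclidean inner product of functions on the node set. -/
noncomputable def ip [Fintype N] (u v : N → ℝ) : ℝ := ∑ x, u x * v x

/-- Length of a walk: the sum of Euclidean edge lengths. -/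
noncomputable def wlen (G : SimpleGraph N) (pos : N → EuclideanSpace ℝ (Fin n))
    {x y : N} (w : G.Walk x y) : ℝ :=
  (w.darts.map (fun d => dist (pos d.toProd.1) (pos d.toProd.2))).sum

/-- Graph distance from `x` to the boundary set `bnd`, along paths inside `T`. -/
noncomputable def distT (G : SimpleGraph N) (pos : N → EuclideanSpace ℝ (Fin n))
    (T bnd : Finset N) (x : N) : ℝ :=
  sInf {ℓ : ℝ | ∃ y ∈ bnd, ∃ w : G.Walk x y, (∀ z ∈ w.support, z ∈ T) ∧ ℓ = wlen G pos w}

/-- The non-normalized bubble function `b̃_T`. -/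
noncomputable def btilde [DecidableEq N] (G : SimpleGraph N) (pos : N → EuclideanSpace ℝ (Fin n))
    (T bnd : Finset N) : N → ℝ :=
  fun x => if x ∈ T then distT G pos T bnd x else 0

/-!
The error `e = u - u_H` lies in `V` and is `K`-orthogonal to `V_H`. Since `K` is an inner product
on `V` (the graph is connected and `Γ ≠ ∅`) and `V_H` is the `K`-orthogonal complement of `W` in
the finite-dimensional space `V`, this forces `e ∈ W`, i.e. `Π_H e = 0`. Hence `(K u_H, e) = 0`
and `γ |e|_L² ≤ (K e, e) = (f, e) ≤ |f|_{M⁻¹} |e|_M`, while the elementwise approximation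
property applied to `e = e - Π_H e`, summed over the partition, gives `|e|_M ≤ C_Π H |e|_L`.
-/

namespace LinearMap.BilinForm

variable {K E : Type*} [Field K] [AddCommGroup E] [Module K E]

theorem inf_orthogonal_inf_orthogonal_le {B : LinearMap.BilinForm K E} (hB : B.IsSymm)
    {V W : Submodule K E} [FiniteDimensional K V] (hV : ∀ v ∈ V, B v v = 0 → v = 0)
    (hWV : W ≤ V) : V ⊓ B.orthogonal (V ⊓ B.orthogonal W) ≤ W := by
  rintro e ⟨heV, he⟩
  set B' := B.restrict V
  have hB'refl : B'.IsRefl := fun x y h => (hB.eq y x).trans h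
  have hB'nondeg : B'.Nondegenerate :=
    hB'refl.nondegenerate_iff_separatingLeft.2 fun x hx => Subtype.ext (hV x x.2 (hx x))
  have hmem : (⟨e, heV⟩ : V) ∈ B'.orthogonal (B'.orthogonal (W.comap V.subtype)) := by
    intro v hv
    refine he v ⟨v.2, fun w hw => ?_⟩
    exact hv ⟨w, hWV hw⟩ hw
  rw [orthogonal_orthogonal hB'nondeg hB'refl] at hmem
  exact hmem

end LinearMap.BilinForm

theorem Finset.sum_univ_eq_sum_sum_of_partition {ι β : Type*} [Fintype ι] [AddCommMonoid β]
    {P : Finset (Finset ι)} (hPdisj : ∀ T ∈ P, ∀ S ∈ P, T ≠ S → Disjoint T S)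
    (hPcover : ∀ x : ι, ∃ T ∈ P, x ∈ T) (g : ι → β) :
    ∑ x, g x = ∑ T ∈ P, ∑ x ∈ T, g x := by
  classical
  have huniv : (univ : Finset ι) = P.biUnion id := by
    ext x
    simpa using hPcover x
  rw [huniv, sum_biUnion (t := id) fun T hT S hS => hPdisj T hT S hS]
  rfl

theorem le_inv_mul_of_mul_sq_le_mul {γ a ℓ : ℝ} (hγ : 0 < γ) (ha : 0 ≤ a)
    (h : γ * ℓ ^ 2 ≤ a * ℓ) : ℓ ≤ γ⁻¹ * a := by
  rw [le_inv_mul_iff₀ hγ]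
  nlinarith

theorem SimpleGraph.Walk.apply_eq_of_forall_adj {β : Type*} {G : SimpleGraph N} {v : N → β}
    (hadj : ∀ x y, G.Adj x y → v x = v y) {x y : N} (w : G.Walk x y) : v x = v y := by
  induction w with
  | nil => rfl
  | cons h _ ih => exact (hadj _ _ h).trans ih

section GraphForms

variable [Fintype N] (G : SimpleGraph N) [DecidableRel G.Adj]
  (pos : N → EuclideanSpace ℝ (Fin n)) (α : ℝ)

noncomputable def nodeWeight (x : N) : ℝ :=
  (1 / 2 : ℝ) * ∑ y ∈ G.neighborFinset x, dist (pos x) (pos y) ^ ((2 : ℝ) - α)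

theorem nodeWeight_nonneg (x : N) : 0 ≤ nodeWeight G pos α x :=
  mul_nonneg (by norm_num) (sum_nonneg fun _ _ => Real.rpow_nonneg dist_nonneg _)

variable {G pos} in
theorem nodeWeight_pos [Nontrivial N] (hconn : G.Preconnected)
    (hdist : ∀ x y : N, G.Adj x y → 0 < dist (pos x) (pos y)) (x : N) :
    0 < nodeWeight G pos α x := by
  have hnbr : (G.neighborFinset x).Nonempty := by
    rw [← card_pos, SimpleGraph.card_neighborFinset_eq_degree]
    exact hconn.degree_pos_of_nontrivial x
  exact mul_pos (by norm_num) (sum_pos (fun y hy =>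
    Real.rpow_pos_of_pos (hdist x y ((G.mem_neighborFinset x y).1 hy)) _) hnbr)

theorem Mform_eq_sum_nodeWeight (S : Finset N) (u v : N → ℝ) :
    Mform G pos α S u v = ∑ x ∈ S, nodeWeight G pos α x * (u x * v x) := by
  simp only [Mform, nodeWeight, mul_assoc, sum_mul]

theorem Mform_self_nonneg (S : Finset N) (v : N → ℝ) : 0 ≤ Mform G pos α S v v := by
  rw [Mform_eq_sum_nodeWeight]
  exact sum_nonneg fun x _ => mul_nonneg (nodeWeight_nonneg G pos α x) (mul_self_nonneg _)

theorem Lform_self_nonneg (S : Finset N) (v : N → ℝ) : 0 ≤ Lform G pos α S v v :=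
  sum_nonneg fun _ _ => mul_nonneg (by norm_num)
    (sum_nonneg fun _ _ => div_nonneg (mul_self_nonneg _) (Real.rpow_nonneg dist_nonneg _))

theorem Mnorm_nonneg (S : Finset N) (v : N → ℝ) : 0 ≤ Mnorm G pos α S v :=
  Real.sqrt_nonneg _

theorem Mnorm_sq (S : Finset N) (v : N → ℝ) : Mnorm G pos α S v ^ 2 = Mform G pos α S v v :=
  Real.sq_sqrt (Mform_self_nonneg G pos α S v)

theorem Lnorm_sq (S : Finset N) (v : N → ℝ) : Lnorm G pos α S v ^ 2 = Lform G pos α S v v :=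
  Real.sq_sqrt (Lform_self_nonneg G pos α S v)

theorem Mnorm_smul (S : Finset N) (c : ℝ) (v : N → ℝ) :
    Mnorm G pos α S (c • v) = |c| * Mnorm G pos α S v := by
  have hform : Mform G pos α S (c • v) (c • v) = c ^ 2 * Mform G pos α S v v := by
    simp only [Mform_eq_sum_nodeWeight, Pi.smul_apply, smul_eq_mul, mul_sum]
    exact sum_congr rfl fun x _ => by ring
  rw [Mnorm, Mnorm, hform, Real.sqrt_mul (sq_nonneg c), Real.sqrt_sq_eq_abs]

theorem Mnorm_neg (S : Finset N) (v : N → ℝ) :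
    Mnorm G pos α S (-v) = Mnorm G pos α S v := by
  rw [← neg_one_smul ℝ v, Mnorm_smul, abs_neg, abs_one, one_mul]

variable {G pos α}

theorem eq_zero_of_Mform_self_eq_zero [Nontrivial N] (hconn : G.Preconnected)
    (hdist : ∀ x y : N, G.Adj x y → 0 < dist (pos x) (pos y)) {v : N → ℝ}
    (hv : Mform G pos α univ v v = 0) : v = 0 := by
  rw [Mform_eq_sum_nodeWeight, sum_eq_zero_iff_of_nonneg fun x _ =>
    mul_nonneg (nodeWeight_nonneg G pos α x) (mul_self_nonneg _)] at hv
  funext x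
  have hx := hv x (mem_univ x)
  rw [mul_eq_zero, or_iff_right (nodeWeight_pos α hconn hdist x).ne', mul_self_eq_zero] at hx
  exact hx

theorem eq_of_adj_of_Lform_self_eq_zero (hdist : ∀ x y : N, G.Adj x y → 0 < dist (pos x) (pos y))
    {v : N → ℝ} (hv : Lform G pos α univ v v = 0) {x y : N} (hxy : G.Adj x y) : v x = v y := by
  have hterm := (sum_eq_zero_iff_of_nonneg fun z _ => mul_nonneg (by norm_num)
    (sum_nonneg fun _ _ => div_nonneg (mul_self_nonneg _) (Real.rpow_nonneg dist_nonneg _))).1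
    hv x (mem_univ x)
  rw [mul_eq_zero, or_iff_right (by norm_num), sum_eq_zero_iff_of_nonneg fun _ _ =>
    div_nonneg (mul_self_nonneg _) (Real.rpow_nonneg dist_nonneg _)] at hterm
  have hxy' := hterm y ((G.mem_neighborFinset x y).2 hxy)
  rw [div_eq_zero_iff, or_iff_left (Real.rpow_pos_of_pos (hdist x y hxy) α).ne',
    mul_self_eq_zero, sub_eq_zero] at hxy'
  exact hxy'

theorem eq_zero_of_Lform_self_eq_zero (hconn : G.Preconnected)
    (hdist : ∀ x y : N, G.Adj x y → 0 < dist (pos x) (pos y)) {Γ : Set N} (hΓ : Γ.Nonempty)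
    {v : N → ℝ} (hvΓ : ∀ x ∈ Γ, v x = 0) (hv : Lform G pos α univ v v = 0) : v = 0 := by
  obtain ⟨g, hg⟩ := hΓ
  funext x
  obtain ⟨w⟩ := hconn x g
  rw [w.apply_eq_of_forall_adj fun _ _ => eq_of_adj_of_Lform_self_eq_zero hdist hv, hvΓ g hg]
  rfl

theorem eq_zero_of_ip_self_eq_zero_of_coercive (hconn : G.Preconnected)
    (hdist : ∀ x y : N, G.Adj x y → 0 < dist (pos x) (pos y)) {Γ : Set N} (hΓ : Γ.Nonempty)
    {K : (N → ℝ) →ₗ[ℝ] (N → ℝ)} {γ : ℝ} (hγ : 0 < γ)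
    (hcoer : ∀ v : N → ℝ, (∀ x ∈ Γ, v x = 0) → γ * Lform G pos α univ v v ≤ ip (K v) v)
    {v : N → ℝ} (hvΓ : ∀ x ∈ Γ, v x = 0) (hv : ip (K v) v = 0) : v = 0 :=
  eq_zero_of_Lform_self_eq_zero hconn hdist hΓ hvΓ <|
    le_antisymm (by nlinarith [hcoer v hvΓ]) (Lform_self_nonneg G pos α univ v)

end GraphForms

section Partition

variable [Fintype N] {G : SimpleGraph N} [DecidableRel G.Adj]
  {pos : N → EuclideanSpace ℝ (Fin n)} {α : ℝ} {P : Finset (Finset N)}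

theorem Mnorm_le_of_forall_mem_partition (hPdisj : ∀ T ∈ P, ∀ S ∈ P, T ≠ S → Disjoint T S)
    (hPcover : ∀ x : N, ∃ T ∈ P, x ∈ T) {c : ℝ} (hc : 0 ≤ c) {v : N → ℝ}
    (hv : ∀ T ∈ P, Mnorm G pos α T v ≤ c * Lnorm G pos α T v) :
    Mnorm G pos α univ v ≤ c * Lnorm G pos α univ v := by
  have hsq : Mform G pos α univ v v ≤ c ^ 2 * Lform G pos α univ v v := by
    rw [Mform, Lform, sum_univ_eq_sum_sum_of_partition hPdisj hPcover,
      sum_univ_eq_sum_sum_of_partition hPdisj hPcover, mul_sum]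
    refine sum_le_sum fun T hT => ?_
    rw [← Mform, ← Lform, ← Mnorm_sq, ← Lnorm_sq, ← mul_pow]
    exact pow_le_pow_left₀ (Real.sqrt_nonneg _) (hv T hT) 2
  rw [Mnorm, Lnorm, ← Real.sqrt_sq hc, ← Real.sqrt_mul (sq_nonneg c)]
  exact Real.sqrt_le_sqrt hsq

theorem avg_add (T : Finset N) (u v : N → ℝ) :
    avg G pos α T (u + v) = avg G pos α T u + avg G pos α T v := by
  simp only [avg, Mform_eq_sum_nodeWeight, Pi.add_apply, ← add_div, ← sum_add_distrib]
  ring_nf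

theorem avg_smul (T : Finset N) (c : ℝ) (v : N → ℝ) :
    avg G pos α T (c • v) = c * avg G pos α T v := by
  rw [avg, avg, mul_div_assoc']
  congr 1
  rw [Mform_eq_sum_nodeWeight, Mform_eq_sum_nodeWeight, mul_sum]
  exact sum_congr rfl fun x _ => by simp only [Pi.smul_apply, smul_eq_mul]; ring

theorem isLinearMap_of_forall_eq_avg (hPcover : ∀ x : N, ∃ T ∈ P, x ∈ T) {proj : (N → ℝ) → (N → ℝ)}
    (hproj : ∀ v : N → ℝ, ∀ T ∈ P, ∀ x ∈ T, proj v x = avg G pos α T v) :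
    IsLinearMap ℝ proj := by
  constructor
  · intro u v
    funext x
    obtain ⟨T, hT, hx⟩ := hPcover x
    simp only [Pi.add_apply, hproj _ T hT x hx, avg_add]
  · intro c v
    funext x
    obtain ⟨T, hT, hx⟩ := hPcover x
    simp only [Pi.smul_apply, smul_eq_mul, hproj _ T hT x hx, avg_smul]

end Partition

theorem ip_eq_dotProduct [Fintype N] (u v : N → ℝ) : ip u v = u ⬝ᵥ v := rfl

section DualNorm

variable [Fintype N] (G : SimpleGraph N) [DecidableRel G.Adj]
  (pos : N → EuclideanSpace ℝ (Fin n)) (α : ℝ)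

noncomputable def dualMnorm (f : N → ℝ) : ℝ :=
  sSup {r : ℝ | ∃ v : N → ℝ, Mnorm G pos α univ v = 1 ∧ r = ip f v}

variable {G pos} [Nontrivial N] (hconn : G.Preconnected)
  (hdist : ∀ x y : N, G.Adj x y → 0 < dist (pos x) (pos y))
include hconn hdist

theorem two_mul_ip_le (f v : N → ℝ) :
    2 * ip f v ≤ ∑ x, f x ^ 2 / nodeWeight G pos α x + Mform G pos α univ v v := by
  rw [ip, Mform_eq_sum_nodeWeight, mul_sum, ← sum_add_distrib]
  refine sum_le_sum fun x _ => ?_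
  have hw := nodeWeight_pos α hconn hdist x
  have hsq : 0 ≤ (f x - nodeWeight G pos α x * v x) ^ 2 / nodeWeight G pos α x :=
    div_nonneg (sq_nonneg _) hw.le
  have hid : (f x - nodeWeight G pos α x * v x) ^ 2 / nodeWeight G pos α x =
      f x ^ 2 / nodeWeight G pos α x + nodeWeight G pos α x * (v x * v x) - 2 * (f x * v x) := by
    field_simp
    ring
  linarith

theorem bddAbove_dualMnorm (f : N → ℝ) :
    BddAbove {r : ℝ | ∃ v : N → ℝ, Mnorm G pos α univ v = 1 ∧ r = ip f v} := by
  refine ⟨(∑ x, f x ^ 2 / nodeWeight G pos α x + 1) / 2, ?_⟩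
  rintro r ⟨v, hv, rfl⟩
  have hM : Mform G pos α univ v v = 1 := by rw [← Mnorm_sq, hv, one_pow]
  have := two_mul_ip_le α hconn hdist f v
  rw [hM] at this
  linarith

theorem ip_le_dualMnorm_mul_Mnorm (f v : N → ℝ) :
    ip f v ≤ dualMnorm G pos α f * Mnorm G pos α univ v := by
  rcases (Mnorm_nonneg G pos α univ v).eq_or_lt with hv | hv
  · have hv0 : v = 0 := eq_zero_of_Mform_self_eq_zero hconn hdist (by rw [← Mnorm_sq, ← hv]; ring)
    rw [← hv, mul_zero, hv0]
    simp [ip]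
  · have hunit : Mnorm G pos α univ ((Mnorm G pos α univ v)⁻¹ • v) = 1 := by
      rw [Mnorm_smul, abs_inv, abs_of_pos hv, inv_mul_cancel₀ hv.ne']
    have hle : ip f ((Mnorm G pos α univ v)⁻¹ • v) ≤ dualMnorm G pos α f :=
      le_csSup (bddAbove_dualMnorm α hconn hdist f) ⟨_, hunit, rfl⟩
    rw [ip_eq_dotProduct, dotProduct_smul, smul_eq_mul, inv_mul_le_iff₀ hv] at hle
    rw [ip_eq_dotProduct, mul_comm]
    exact hle

theorem dualMnorm_nonneg (f : N → ℝ) : 0 ≤ dualMnorm G pos α f := by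
  set one : N → ℝ := fun _ => 1
  have hpos : 0 < Mnorm G pos α univ one := by
    refine (Mnorm_nonneg G pos α univ one).lt_of_ne fun h => ?_
    have hone : one = 0 := eq_zero_of_Mform_self_eq_zero hconn hdist (by rw [← Mnorm_sq, ← h]; ring)
    obtain ⟨x⟩ := (inferInstance : Nonempty N)
    exact one_ne_zero (congrFun hone x)
  have h₁ := ip_le_dualMnorm_mul_Mnorm α hconn hdist f one
  have h₂ := ip_le_dualMnorm_mul_Mnorm α hconn hdist f (-one)
  rw [Mnorm_neg, ip_eq_dotProduct, dotProduct_neg, ← ip_eq_dotProduct] at h₂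
  nlinarith

end DualNorm

section Galerkin

variable [Fintype N] {K : (N → ℝ) →ₗ[ℝ] (N → ℝ)} {Γ : Set N} {proj : (N → ℝ) → (N → ℝ)}

theorem ip_apply_comm_of_symm (hKsym : ∀ u v : N → ℝ, ip (K u) v = ip u (K v)) (u v : N → ℝ) :
    ip (K u) v = ip (K v) u := by
  rw [hKsym, ip_eq_dotProduct, ip_eq_dotProduct, dotProduct_comm]

/-- The `K`-orthogonal complement of `V_H` in `V` is the fine space `W = V ∩ ker proj`. -/
theorem proj_eq_zero_of_forall_coarse_ip_eq_zero (hKsym : ∀ u v : N → ℝ, ip (K u) v = ip u (K v))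
    (hKdef : ∀ v : N → ℝ, (∀ x ∈ Γ, v x = 0) → ip (K v) v = 0 → v = 0)
    (hproj : IsLinearMap ℝ proj) {e : N → ℝ} (heΓ : ∀ x ∈ Γ, e x = 0)
    (horth : ∀ v : N → ℝ, ((∀ x ∈ Γ, v x = 0) ∧
        ∀ w : N → ℝ, ((∀ x ∈ Γ, w x = 0) ∧ proj w = 0) → ip (K v) w = 0) → ip (K e) v = 0) :
    proj e = 0 := by
  let B : LinearMap.BilinForm ℝ (N → ℝ) := (dotProductBilin ℝ ℝ).comp K
  let V : Submodule ℝ (N → ℝ) := Submodule.pi Γ fun _ => ⊥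
  let W : Submodule ℝ (N → ℝ) := V ⊓ LinearMap.ker (hproj.mk' proj)
  have hV : ∀ v, v ∈ V ↔ ∀ x ∈ Γ, v x = 0 := by
    simp only [V, Submodule.mem_pi, Submodule.mem_bot, implies_true]
  have hW : ∀ w, w ∈ W ↔ (∀ x ∈ Γ, w x = 0) ∧ proj w = 0 := by
    simp only [W, Submodule.mem_inf, hV, LinearMap.mem_ker, IsLinearMap.mk'_apply, implies_true]
  have hB : B.IsSymm := LinearMap.BilinForm.isSymm_def.2 (ip_apply_comm_of_symm hKsym)
  have heW : e ∈ W := by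
    refine LinearMap.BilinForm.inf_orthogonal_inf_orthogonal_le hB
      (fun v hv => hKdef v ((hV v).1 hv)) inf_le_left ⟨(hV e).2 heΓ, fun v ⟨hvV, hvW⟩ => ?_⟩
    show ip (K v) e = 0
    rw [ip_apply_comm_of_symm hKsym]
    refine horth v ⟨(hV v).1 hvV, fun w hw => ?_⟩
    rw [ip_apply_comm_of_symm hKsym]
    exact hvW w ((hW w).2 hw)
  exact ((hW e).1 heW).2

end Galerkin

theorem stmt8_general [Fintype N] (G : SimpleGraph N) [DecidableRel G.Adj]
    (pos : N → EuclideanSpace ℝ (Fin n)) (α : ℝ)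
    (hdist : ∀ x y : N, G.Adj x y → 0 < dist (pos x) (pos y))
    (hcard : 1 < Fintype.card N) (hconn : G.Connected)
    (Γ : Set N) (hΓ : Γ.Nonempty)
    (P : Finset (Finset N))
    (hPdisj : ∀ T ∈ P, ∀ S ∈ P, T ≠ S → Disjoint T S)
    (hPcover : ∀ x : N, ∃ T ∈ P, x ∈ T)
    (Pi : (N → ℝ) → (N → ℝ))
    (hPi : ∀ v : N → ℝ, ∀ T ∈ P, ∀ x ∈ T, Pi v x = avg G pos α T v)
    (K : (N → ℝ) →ₗ[ℝ] (N → ℝ))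
    (hKsym : ∀ u v : N → ℝ, ip (K u) v = ip u (K v))
    (γ γ' : ℝ) (hγ : 0 < γ)
    (hspec : ∀ v : N → ℝ, (∀ x ∈ Γ, v x = 0) →
      γ * Lform G pos α Finset.univ v v ≤ ip (K v) v ∧
        ip (K v) v ≤ γ' * Lform G pos α Finset.univ v v)
    (f u : N → ℝ) (hu : ∀ x ∈ Γ, u x = 0)
    (hsol : ∀ v : N → ℝ, (∀ x ∈ Γ, v x = 0) → ip (K u) v = ip f v)
    (uH : N → ℝ) (huHV : ∀ x ∈ Γ, uH x = 0)
    (huHmem : ∀ w : N → ℝ, ((∀ x ∈ Γ, w x = 0) ∧ Pi w = 0) → ip (K uH) w = 0)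
    (huHsol : ∀ v : N → ℝ, ((∀ x ∈ Γ, v x = 0) ∧
        (∀ w : N → ℝ, ((∀ x ∈ Γ, w x = 0) ∧ Pi w = 0) → ip (K v) w = 0)) →
      ip (K uH) v = ip f v)
    (Cpi H : ℝ) (hCpi : 0 < Cpi) (hH : 0 < H)
    (happrox : ∀ T ∈ P, ∀ v : N → ℝ,
      Mnorm G pos α T (fun x => v x - Pi v x) ≤ Cpi * H * Lnorm G pos α T v) :
    Lnorm G pos α Finset.univ (fun x => u x - uH x) ≤
      Cpi * γ⁻¹ * H *
        sSup {r : ℝ | ∃ v : N → ℝ, Mnorm G pos α Finset.univ v = 1 ∧ r = ip f v} := by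
  have : Nontrivial N := Fintype.one_lt_card_iff_nontrivial.1 hcard
  set e : N → ℝ := u - uH
  have heΓ : ∀ x ∈ Γ, e x = 0 := fun x hx => by simp [e, hu x hx, huHV x hx]
  have hKe : ∀ v, ip (K e) v = ip (K u) v - ip (K uH) v := fun v => by
    simp only [e, map_sub, ip_eq_dotProduct, sub_dotProduct]
  have hPie : Pi e = 0 := proj_eq_zero_of_forall_coarse_ip_eq_zero hKsym
    (fun v hv => eq_zero_of_ip_self_eq_zero_of_coercive hconn.preconnected hdist hΓ hγ
      (fun v hv => (hspec v hv).1) hv) (isLinearMap_of_forall_eq_avg hPcover hPi) heΓ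
    fun v hv => by rw [hKe, hsol v hv.1, huHsol v hv, sub_self]
  have hMe : Mnorm G pos α univ e ≤ Cpi * H * Lnorm G pos α univ e :=
    Mnorm_le_of_forall_mem_partition hPdisj hPcover (by positivity) fun T hT => by
      simpa [hPie] using happrox T hT e
  have hS := dualMnorm_nonneg α hconn.preconnected hdist f
  have henergy : γ * Lnorm G pos α univ e ^ 2 ≤
      (dualMnorm G pos α f * (Cpi * H)) * Lnorm G pos α univ e := calc
    _ = γ * Lform G pos α univ e e := by rw [Lnorm_sq]
    _ ≤ ip (K e) e := (hspec e heΓ).1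
    _ = ip f e := by rw [hKe, hsol e heΓ, huHmem e ⟨heΓ, hPie⟩, sub_zero]
    _ ≤ dualMnorm G pos α f * Mnorm G pos α univ e :=
      ip_le_dualMnorm_mul_Mnorm α hconn.preconnected hdist f e
    _ ≤ _ := by rw [mul_assoc]; exact mul_le_mul_of_nonneg_left hMe hS
  calc _ ≤ γ⁻¹ * (dualMnorm G pos α f * (Cpi * H)) :=
        le_inv_mul_of_mul_sq_le_mul hγ (by positivity) henergy
    _ = _ := by rw [dualMnorm]; ring

theorem stmt8 [Fintype N] [DecidableEq N] (G : SimpleGraph N) [DecidableRel G.Adj]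
    (pos : N → EuclideanSpace ℝ (Fin n)) (α : ℝ)
    (hα : 0 ≤ α ∧ α ≤ 2) (hpos : Function.Injective pos)
    (hdist : ∀ x y : N, G.Adj x y → 0 < dist (pos x) (pos y))
    (hcard : 1 < Fintype.card N) (hconn : G.Connected)
    (Γ : Set N) (hΓ : Γ.Nonempty)
    (P : Finset (Finset N))
    (hPne : ∀ T ∈ P, T.Nonempty)
    (hPdisj : ∀ T ∈ P, ∀ S ∈ P, T ≠ S → Disjoint T S)
    (hPcover : ∀ x : N, ∃ T ∈ P, x ∈ T)
    (Pi : (N → ℝ) → (N → ℝ))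
    (hPi : ∀ v : N → ℝ, ∀ T ∈ P, ∀ x ∈ T, Pi v x = avg G pos α T v)
    (K : (N → ℝ) →ₗ[ℝ] (N → ℝ))
    (hKsym : ∀ u v : N → ℝ, ip (K u) v = ip u (K v))
    (γ γ' : ℝ) (hγ : 0 < γ) (hγγ' : γ ≤ γ')
    (hspec : ∀ v : N → ℝ, (∀ x ∈ Γ, v x = 0) →
      γ * Lform G pos α Finset.univ v v ≤ ip (K v) v ∧
        ip (K v) v ≤ γ' * Lform G pos α Finset.univ v v)
    (f u : N → ℝ) (hu : ∀ x ∈ Γ, u x = 0)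
    (hsol : ∀ v : N → ℝ, (∀ x ∈ Γ, v x = 0) → ip (K u) v = ip f v)
    (uH : N → ℝ) (huHV : ∀ x ∈ Γ, uH x = 0)
    (huHmem : ∀ w : N → ℝ, ((∀ x ∈ Γ, w x = 0) ∧ Pi w = 0) → ip (K uH) w = 0)
    (huHsol : ∀ v : N → ℝ, ((∀ x ∈ Γ, v x = 0) ∧
        (∀ w : N → ℝ, ((∀ x ∈ Γ, w x = 0) ∧ Pi w = 0) → ip (K v) w = 0)) →
      ip (K uH) v = ip f v)
    (Cpi H : ℝ) (hCpi : 0 < Cpi) (hH : 0 < H)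
    (happrox : ∀ T ∈ P, ∀ v : N → ℝ,
      Mnorm G pos α T (fun x => v x - Pi v x) ≤ Cpi * H * Lnorm G pos α T v) :
    Lnorm G pos α Finset.univ (fun x => u x - uH x) ≤
      Cpi * γ⁻¹ * H *
        sSup {r : ℝ | ∃ v : N → ℝ, Mnorm G pos α Finset.univ v = 1 ∧ r = ip f v} :=
  stmt8_general G pos α hdist hcard hconn Γ hΓ P hPdisj hPcover Pi hPi K hKsym γ γ' hγ hspec f u hu
    hsol uH huHV huHmem huHsol Cpi H hCpi hH happrox
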